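/- Let p > 1, let B ⊂ ℝⁿ be an open ball, let γ ∈ (0,1], and let w : B → ℝ^N be a function such that the composition V_p ∘ w : B → ℝ^N is Hölder continuous on B with exponent γ, i.e. there is H ≥ 0 with |V_p(w(x)) − V_p(w(y))| ≤ H |x − y|^γ for all x, y ∈ B. Then w is Hölder continuous on B with exponent β := min{1, 2/p} · γ, i.e. there exists H' ≥ 0 with |w(x) − w(y)| ≤ H' |x − y|^β for all x, y ∈ B. -/

import Mathlib

/-!
`Vp p` has a Lipschitz inverse on bounded sets, so on the ball `w` is even `γ`-Hölder, and
`β ≤ γ` on a bounded set. Writing `Vp p z = f ‖z‖ • z`, the inner product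
`⟪Vp p z - Vp p z', z - z'⟫` splits into a radial part `(g ‖z‖ - g ‖z'‖) (‖z‖ - ‖z'‖)`, where the
profile `g t = (1 + t²) ^ ((p - 2) / 4) * t` has `g' ≥ min 1 (p / 2) * (1 + t²) ^ ((p - 2) / 4)`,
and a tangential part `(f ‖z‖ + f ‖z'‖) / 2 * (‖z - z'‖² - (‖z‖ - ‖z'‖)²) ≥ 0`; both are
bounded below by a multiple of `‖z - z'‖²` on a ball. Boundedness of `w` follows from
`‖z‖⁴ ≤ ‖Vp p z‖⁴ (1 + ‖z‖²)`, valid for `p ≥ 1`.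
-/

noncomputable def Vp (p : ℝ) {E : Type*} [NormedAddCommGroup E] [NormedSpace ℝ E] (z : E) : E :=
  ((1 + ‖z‖ ^ 2) ^ ((p - 2) / 4)) • z

open Set RealInnerProductSpace

lemma min_one_rpow_le_rpow {x y m : ℝ} (hx : 1 ≤ x) (hxy : x ≤ y) : min 1 (y ^ m) ≤ x ^ m := by
  rcases le_total 0 m with hm | hm
  · exact (min_le_left _ _).trans (Real.one_le_rpow hx hm)
  · exact (min_le_right _ _).trans (Real.rpow_le_rpow_of_nonpos (by linarith) hxy hm)

lemma rpow_le_rpow_sub_mul_rpow {t D β γ : ℝ} (ht : 0 ≤ t) (htD : t ≤ D) (hβγ : β ≤ γ)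
    (hγ : γ ≠ 0) : t ^ γ ≤ D ^ (γ - β) * t ^ β := by
  calc t ^ γ = t ^ (γ - β) * t ^ β := by
        rw [← Real.rpow_add' ht (by rwa [sub_add_cancel]), sub_add_cancel]
    _ ≤ D ^ (γ - β) * t ^ β :=
        mul_le_mul_of_nonneg_right (Real.rpow_le_rpow ht htD (sub_nonneg.2 hβγ))
          (Real.rpow_nonneg ht _)

lemma hasDerivAt_one_add_sq_rpow_mul (p t : ℝ) :
    HasDerivAt (fun s : ℝ => (1 + s ^ 2) ^ ((p - 2) / 4) * s)
      ((1 + t ^ 2) ^ ((p - 2) / 4 - 1) * (1 + p / 2 * t ^ 2)) t := by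
  have hpos : 0 < 1 + t ^ 2 := by positivity
  refine ((((hasDerivAt_pow 2 t).const_add 1).rpow_const (p := (p - 2) / 4)
    (Or.inl hpos.ne')).mul (hasDerivAt_id t)).congr_deriv ?_
  rw [← sub_add_cancel ((p - 2) / 4) 1, Real.rpow_add_one hpos.ne', sub_add_cancel]
  simp only [id, Nat.cast_ofNat]
  ring

lemma sq_sub_le_one_add_sq_rpow_mul_sub {p R a b : ℝ} (hp : 0 ≤ p) (ha : a ∈ Icc 0 R)
    (hb : b ∈ Icc 0 R) :
    min 1 (p / 2) * min 1 ((1 + R ^ 2) ^ ((p - 2) / 4)) * (a - b) ^ 2 ≤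
      ((1 + a ^ 2) ^ ((p - 2) / 4) * a - (1 + b ^ 2) ^ ((p - 2) / 4) * b) * (a - b) := by
  wlog hba : b ≤ a generalizing a b
  · convert this hb ha (le_of_not_ge hba) using 1 <;> ring
  set κ := min 1 (p / 2) * min 1 ((1 + R ^ 2) ^ ((p - 2) / 4))
  have hderiv : ∀ t ∈ interior (Icc 0 R),
      κ ≤ deriv (fun s : ℝ => (1 + s ^ 2) ^ ((p - 2) / 4) * s) t := by
    intro t ht
    rw [interior_Icc] at ht
    have hpos : 0 < 1 + t ^ 2 := by positivity
    rw [(hasDerivAt_one_add_sq_rpow_mul p t).deriv]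
    calc κ ≤ min 1 (p / 2) * (1 + t ^ 2) ^ ((p - 2) / 4) := by
          refine mul_le_mul_of_nonneg_left ?_ (le_min zero_le_one (by linarith))
          exact min_one_rpow_le_rpow (by nlinarith) (by nlinarith [ht.1, ht.2])
      _ = (1 + t ^ 2) ^ ((p - 2) / 4 - 1) * (min 1 (p / 2) * (1 + t ^ 2)) := by
          rw [← sub_add_cancel ((p - 2) / 4) 1, Real.rpow_add_one hpos.ne', sub_add_cancel]
          ring
      _ ≤ (1 + t ^ 2) ^ ((p - 2) / 4 - 1) * (1 + p / 2 * t ^ 2) := by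
          gcongr
          nlinarith [min_le_left 1 (p / 2), min_le_right 1 (p / 2), sq_nonneg t]
  have hmvt := (convex_Icc 0 R).mul_sub_le_image_sub_of_le_deriv
    (fun t _ => (hasDerivAt_one_add_sq_rpow_mul p t).continuousAt.continuousWithinAt)
    (fun t _ => (hasDerivAt_one_add_sq_rpow_mul p t).differentiableAt.differentiableWithinAt)
    hderiv b hb a ha hba
  calc κ * (a - b) ^ 2 = κ * (a - b) * (a - b) := by ring
    _ ≤ _ := mul_le_mul_of_nonneg_right hmvt (sub_nonneg.2 hba)

section Vp

variable {E : Type*} [NormedAddCommGroup E] [InnerProductSpace ℝ E] {p : ℝ}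

lemma inner_smul_sub_smul_sub (α β : ℝ) (z z' : E) :
    ⟪α • z - β • z', z - z'⟫ = (α * ‖z‖ - β * ‖z'‖) * (‖z‖ - ‖z'‖) +
      (α + β) / 2 * (‖z - z'‖ ^ 2 - (‖z‖ - ‖z'‖) ^ 2) := by
  rw [norm_sub_sq_real]
  simp only [inner_sub_left, inner_sub_right, real_inner_smul_left, real_inner_self_eq_norm_sq,
    real_inner_comm z z']
  ring

lemma mul_sq_norm_sub_le_inner_Vp_sub (hp : 0 ≤ p) {R : ℝ} {z z' : E} (hz : ‖z‖ ≤ R)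
    (hz' : ‖z'‖ ≤ R) :
    min 1 (p / 2) * min 1 ((1 + R ^ 2) ^ ((p - 2) / 4)) * ‖z - z'‖ ^ 2 ≤
      ⟪Vp p z - Vp p z', z - z'⟫ := by
  set k := min 1 ((1 + R ^ 2) ^ ((p - 2) / 4))
  have hk : ∀ y : E, ‖y‖ ≤ R → k ≤ (1 + ‖y‖ ^ 2) ^ ((p - 2) / 4) := fun y hy =>
    min_one_rpow_le_rpow (by nlinarith [norm_nonneg y]) (by nlinarith [norm_nonneg y])
  have hck : min 1 (p / 2) * k ≤ k :=
    mul_le_of_le_one_left (le_min zero_le_one (Real.rpow_nonneg (by positivity) _))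
      (min_le_left _ _)
  have hnorm : (‖z‖ - ‖z'‖) ^ 2 ≤ ‖z - z'‖ ^ 2 := by
    rw [← sq_abs]; exact pow_le_pow_left₀ (abs_nonneg _) (abs_norm_sub_norm_le z z') 2
  have hprofile := sq_sub_le_one_add_sq_rpow_mul_sub hp (a := ‖z‖) (b := ‖z'‖) (R := R)
    ⟨norm_nonneg _, hz⟩ ⟨norm_nonneg _, hz'⟩
  have hcross : min 1 (p / 2) * k * (‖z - z'‖ ^ 2 - (‖z‖ - ‖z'‖) ^ 2) ≤
      ((1 + ‖z‖ ^ 2) ^ ((p - 2) / 4) + (1 + ‖z'‖ ^ 2) ^ ((p - 2) / 4)) / 2 *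
        (‖z - z'‖ ^ 2 - (‖z‖ - ‖z'‖) ^ 2) :=
    mul_le_mul_of_nonneg_right (by linarith [hk z hz, hk z' hz']) (sub_nonneg.2 hnorm)
  rw [Vp, Vp, inner_smul_sub_smul_sub]
  linarith

lemma exists_pos_mul_norm_sub_le_norm_Vp_sub (hp : 0 < p) (R : ℝ) :
    ∃ c > 0, ∀ z z' : E, ‖z‖ ≤ R → ‖z'‖ ≤ R → c * ‖z - z'‖ ≤ ‖Vp p z - Vp p z'‖ := by
  refine ⟨min 1 (p / 2) * min 1 ((1 + R ^ 2) ^ ((p - 2) / 4)), by positivity,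
    fun z z' hz hz' => ?_⟩
  rcases (norm_nonneg (z - z')).eq_or_lt with h0 | hpos
  · rw [← h0, mul_zero]; exact norm_nonneg _
  refine le_of_mul_le_mul_right ?_ hpos
  calc _ = min 1 (p / 2) * min 1 ((1 + R ^ 2) ^ ((p - 2) / 4)) * ‖z - z'‖ ^ 2 := by ring
    _ ≤ ⟪Vp p z - Vp p z', z - z'⟫ := mul_sq_norm_sub_le_inner_Vp_sub hp.le hz hz'
    _ ≤ ‖Vp p z - Vp p z'‖ * ‖z - z'‖ := real_inner_le_norm _ _

end Vp

section Coercive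

variable {E : Type*} [NormedAddCommGroup E] [NormedSpace ℝ E] {p : ℝ}

lemma norm_Vp (p : ℝ) (z : E) : ‖Vp p z‖ = (1 + ‖z‖ ^ 2) ^ ((p - 2) / 4) * ‖z‖ := by
  rw [Vp, norm_smul, Real.norm_of_nonneg (by positivity)]

lemma norm_pow_four_le_norm_Vp_pow_four_mul (hp : 1 ≤ p) (z : E) :
    ‖z‖ ^ 4 ≤ ‖Vp p z‖ ^ 4 * (1 + ‖z‖ ^ 2) := by
  have hpos : 0 < 1 + ‖z‖ ^ 2 := by positivity
  calc ‖z‖ ^ 4 ≤ (1 + ‖z‖ ^ 2) ^ (p - 1) * ‖z‖ ^ 4 :=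
        le_mul_of_one_le_left (by positivity)
          (Real.one_le_rpow (by nlinarith [norm_nonneg z]) (by linarith))
    _ = ‖Vp p z‖ ^ 4 * (1 + ‖z‖ ^ 2) := by
        rw [norm_Vp, mul_pow, ← Real.rpow_mul_natCast hpos.le,
          show p - 1 = (p - 2) / 4 * (4 : ℕ) + 1 by push_cast; ring, Real.rpow_add_one hpos.ne']
        ring

lemma norm_le_of_norm_Vp_le (hp : 1 ≤ p) {z : E} {M : ℝ} (hM : ‖Vp p z‖ ≤ M) :
    ‖z‖ ≤ max 1 (2 * M ^ 4) := by
  rcases le_or_gt ‖z‖ 1 with h | h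
  · exact le_max_of_le_left h
  refine le_max_of_le_right ?_
  have hsq : ‖z‖ ^ 2 * ‖z‖ ^ 2 ≤ 2 * M ^ 4 * ‖z‖ ^ 2 :=
    calc ‖z‖ ^ 2 * ‖z‖ ^ 2 = ‖z‖ ^ 4 := by ring
      _ ≤ ‖Vp p z‖ ^ 4 * (1 + ‖z‖ ^ 2) := norm_pow_four_le_norm_Vp_pow_four_mul hp z
      _ ≤ M ^ 4 * (‖z‖ ^ 2 + ‖z‖ ^ 2) := by gcongr; nlinarith
      _ = 2 * M ^ 4 * ‖z‖ ^ 2 := by ring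
  nlinarith [le_of_mul_le_mul_right hsq (by positivity)]

end Coercive

theorem stmt_11_general (n N : ℕ) (p : ℝ) (hp : 1 < p)
    (x₀ : EuclideanSpace ℝ (Fin n)) (ρ : ℝ) (hρ : 0 < ρ)
    (γ : ℝ) (hγ0 : 0 < γ)
    (w : EuclideanSpace ℝ (Fin n) → EuclideanSpace ℝ (Fin N))
    (H : ℝ) (hH : 0 ≤ H)
    (hHol : ∀ x ∈ Metric.ball x₀ ρ, ∀ y ∈ Metric.ball x₀ ρ,
      ‖Vp p (w x) - Vp p (w y)‖ ≤ H * ‖x - y‖ ^ γ) :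
    ∃ H' : ℝ, 0 ≤ H' ∧ ∀ x ∈ Metric.ball x₀ ρ, ∀ y ∈ Metric.ball x₀ ρ,
      ‖w x - w y‖ ≤ H' * ‖x - y‖ ^ (min 1 (2 / p) * γ) := by
  have hdist : ∀ x ∈ Metric.ball x₀ ρ, ∀ y ∈ Metric.ball x₀ ρ, ‖x - y‖ ≤ 2 * ρ :=
    fun x hx y hy => by
      rw [← dist_eq_norm]
      linarith [dist_triangle_right x y x₀, Metric.mem_ball.1 hx, Metric.mem_ball.1 hy]
  have hx₀ : x₀ ∈ Metric.ball x₀ ρ := Metric.mem_ball_self hρ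
  set M := ‖Vp p (w x₀)‖ + H * (2 * ρ) ^ γ
  have hVw : ∀ x ∈ Metric.ball x₀ ρ, ‖Vp p (w x)‖ ≤ M := fun x hx => by
    have : H * ‖x - x₀‖ ^ γ ≤ H * (2 * ρ) ^ γ := by gcongr; exact hdist x hx x₀ hx₀
    linarith [norm_le_insert' (Vp p (w x)) (Vp p (w x₀)), hHol x hx x₀ hx₀]
  have hw := fun x hx => norm_le_of_norm_Vp_le hp.le (hVw x hx)
  obtain ⟨c, hc, hinv⟩ :=
    exists_pos_mul_norm_sub_le_norm_Vp_sub (E := EuclideanSpace ℝ (Fin N)) (by linarith : 0 < p)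
      (max 1 (2 * M ^ 4))
  have hβγ : min 1 (2 / p) * γ ≤ γ := mul_le_of_le_one_left hγ0.le (min_le_left _ _)
  refine ⟨H / c * (2 * ρ) ^ (γ - min 1 (2 / p) * γ), by positivity, fun x hx y hy => ?_⟩
  calc ‖w x - w y‖ ≤ H / c * ‖x - y‖ ^ γ := by
        rw [div_mul_eq_mul_div, le_div_iff₀ hc]
        linarith [hinv _ _ (hw x hx) (hw y hy), hHol x hx y hy]
    _ ≤ H / c * ((2 * ρ) ^ (γ - min 1 (2 / p) * γ) * ‖x - y‖ ^ (min 1 (2 / p) * γ)) := by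
        gcongr
        exact rpow_le_rpow_sub_mul_rpow (norm_nonneg _) (hdist x hx y hy) hβγ hγ0.ne'
    _ = _ := by ring

theorem stmt_11 (n N : ℕ) (hn : 1 ≤ n) (hN : 1 ≤ N) (p : ℝ) (hp : 1 < p)
    (x₀ : EuclideanSpace ℝ (Fin n)) (ρ : ℝ) (hρ : 0 < ρ)
    (γ : ℝ) (hγ0 : 0 < γ) (hγ1 : γ ≤ 1)
    (w : EuclideanSpace ℝ (Fin n) → EuclideanSpace ℝ (Fin N))
    (H : ℝ) (hH : 0 ≤ H)
    (hHol : ∀ x ∈ Metric.ball x₀ ρ, ∀ y ∈ Metric.ball x₀ ρ,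
      ‖Vp p (w x) - Vp p (w y)‖ ≤ H * ‖x - y‖ ^ γ) :
    ∃ H' : ℝ, 0 ≤ H' ∧ ∀ x ∈ Metric.ball x₀ ρ, ∀ y ∈ Metric.ball x₀ ρ,
      ‖w x - w y‖ ≤ H' * ‖x - y‖ ^ (min 1 (2 / p) * γ) :=
  stmt_11_general n N p hp x₀ ρ hρ γ hγ0 w H hH hHol
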